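/- arXiv:2107.02917 — 4 statements merged into one kernel-verified Lean document; each statement's English description precedes it below -/
import Mathlib

section
/- Let G₁ and G₂ be countable discrete groups. If the direct product G = G₁ × G₂ is properly proximal, then both G₁ and G₂ are properly proximal. -/
open scoped Pointwise ComplexOrder

namespace PPx

universe u v w

/-- A function `G → ℂ` is bounded, i.e. belongs to `ℓ^∞(G)`. -/
def Bdd {G : Type*} (f : G → ℂ) : Prop := ∃ C : ℝ, ∀ x, ‖f x‖ ≤ C

/-- A sequence `g : ℕ → G` goes to infinity relative to the family of subgroups `S`:
for every `H ∈ S` and `t₁ t₂ : G`, `gₙ ∈ t₁ H t₂` for only finitely many `n`. -/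
def TendstoInftyRel {G : Type*} [Group G] (S : Set (Subgroup G)) (g : ℕ → G) : Prop :=
  ∀ H ∈ S, ∀ t₁ t₂ : G, {n : ℕ | ∃ h ∈ H, g n = t₁ * h * t₂}.Finite

/-- `f` belongs to `c₀(G, S)`: `f` is bounded and `f(gₙ) → 0` whenever `gₙ → ∞/S`. -/
def MemC0Rel {G : Type*} [Group G] (S : Set (Subgroup G)) (f : G → ℂ) : Prop :=
  Bdd f ∧ ∀ g : ℕ → G, TendstoInftyRel S g →
    Filter.Tendsto (fun n => f (g n)) Filter.atTop (nhds 0)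

/-- `f` represents a right-translation-fixed element of `ℓ^∞(G)/c₀(G,S)`. -/
def MemFixQuot {G : Type*} [Group G] (S : Set (Subgroup G)) (f : G → ℂ) : Prop :=
  Bdd f ∧ ∀ h : G, MemC0Rel S (fun x => f (x * h) - f x)

/-- `φ` encodes a left-translation-invariant state on the C*-algebra of
right-translation-fixed elements of `ℓ^∞(G)/c₀(G,S)`. -/
def IsInvariantStateRel {G : Type*} [Group G] (S : Set (Subgroup G))
    (φ : (G → ℂ) → ℂ) : Prop :=
  (∀ f₁ f₂, MemFixQuot S f₁ → MemFixQuot S f₂ → φ (f₁ + f₂) = φ f₁ + φ f₂) ∧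
  (∀ (c : ℂ) (f), MemFixQuot S f → φ (c • f) = c * φ f) ∧
  (∀ f, MemFixQuot S f → 0 ≤ φ (star f * f)) ∧
  φ 1 = 1 ∧
  (∀ f, MemC0Rel S f → φ f = 0) ∧
  (∀ (h : G) (f), MemFixQuot S f → φ (fun x => f (h⁻¹ * x)) = φ f)

/-- `G` is properly proximal relative to the family of subgroups `S`. -/
def ProperlyProximalRel (G : Type*) [Group G] (S : Set (Subgroup G)) : Prop :=
  ¬ ∃ φ : (G → ℂ) → ℂ, IsInvariantStateRel S φ

/-- `G` is properly proximal. -/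
def ProperlyProximal (G : Type*) [Group G] : Prop :=
  ProperlyProximalRel G {⊥}

section Aux

variable {A : Type*} {B : Type*} [Group A] [Group B]

lemma tendstoInfty_bot_iff (g : ℕ → A) :
    TendstoInftyRel ({⊥} : Set (Subgroup A)) g ↔ ∀ t : A, {n | g n = t}.Finite := by
  constructor
  · intro H t
    refine (H ⊥ rfl t 1).subset ?_
    intro n hn
    exact ⟨1, Subgroup.mem_bot.2 rfl, by simpa using hn⟩
  · intro H Hsub hs t₁ t₂
    rw [Set.mem_singleton_iff] at hs; subst hs
    refine (H (t₁ * t₂)).subset ?_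
    rintro n ⟨h, hh, hn⟩
    rw [Subgroup.mem_bot.1 hh] at hn
    simpa using hn

lemma memC0_restrict {F : A × B → ℂ} (b : B)
    (hF : MemC0Rel ({⊥} : Set (Subgroup (A × B))) F) :
    MemC0Rel ({⊥} : Set (Subgroup A)) (fun x => F (x, b)) := by
  obtain ⟨⟨C, hC⟩, hF0⟩ := hF
  refine ⟨⟨C, fun x => hC _⟩, ?_⟩
  intro g hg
  refine hF0 (fun n => (g n, b)) ?_
  rw [tendstoInfty_bot_iff] at hg ⊢
  intro t
  refine (hg t.1).subset ?_
  intro n hn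
  simpa using congrArg Prod.fst hn

lemma memC0_mulRight {f : A → ℂ} (a : A)
    (hf : MemC0Rel ({⊥} : Set (Subgroup A)) f) :
    MemC0Rel ({⊥} : Set (Subgroup A)) (fun x => f (x * a)) := by
  obtain ⟨⟨C, hC⟩, hf0⟩ := hf
  refine ⟨⟨C, fun x => hC _⟩, ?_⟩
  intro g hg
  refine hf0 (fun n => g n * a) ?_
  rw [tendstoInfty_bot_iff] at hg ⊢
  intro t
  refine (hg (t * a⁻¹)).subset ?_
  intro n hn
  simp only [Set.mem_setOf_eq] at hn ⊢
  rw [← hn]; group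

lemma memC0_mulLeft {f : A → ℂ} (a : A)
    (hf : MemC0Rel ({⊥} : Set (Subgroup A)) f) :
    MemC0Rel ({⊥} : Set (Subgroup A)) (fun x => f (a * x)) := by
  obtain ⟨⟨C, hC⟩, hf0⟩ := hf
  refine ⟨⟨C, fun x => hC _⟩, ?_⟩
  intro g hg
  refine hf0 (fun n => a * g n) ?_
  rw [tendstoInfty_bot_iff] at hg ⊢
  intro t
  refine (hg (a⁻¹ * t)).subset ?_
  intro n hn
  simp only [Set.mem_setOf_eq] at hn ⊢
  rw [← hn]; group

lemma memC0_sub {f₁ f₂ : A → ℂ}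
    (h₁ : MemC0Rel ({⊥} : Set (Subgroup A)) f₁)
    (h₂ : MemC0Rel ({⊥} : Set (Subgroup A)) f₂) :
    MemC0Rel ({⊥} : Set (Subgroup A)) (fun x => f₁ x - f₂ x) := by
  obtain ⟨⟨C₁, hC₁⟩, h₁0⟩ := h₁
  obtain ⟨⟨C₂, hC₂⟩, h₂0⟩ := h₂
  refine ⟨⟨C₁ + C₂, fun x => (norm_sub_le _ _).trans (add_le_add (hC₁ x) (hC₂ x))⟩, ?_⟩
  intro g hg
  simpa using (h₁0 g hg).sub (h₂0 g hg)

lemma memFix_of_memC0 {f : A → ℂ}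
    (hf : MemC0Rel ({⊥} : Set (Subgroup A)) f) :
    MemFixQuot ({⊥} : Set (Subgroup A)) f :=
  ⟨hf.1, fun h => memC0_sub (memC0_mulRight h hf) hf⟩

lemma memFix_restrict {F : A × B → ℂ} (b : B)
    (hF : MemFixQuot ({⊥} : Set (Subgroup (A × B))) F) :
    MemFixQuot ({⊥} : Set (Subgroup A)) (fun x => F (x, b)) := by
  refine ⟨⟨hF.1.choose, fun x => hF.1.choose_spec _⟩, ?_⟩
  intro h
  have := memC0_restrict (A := A) (B := B) b (hF.2 (h, 1))
  simpa using this

lemma memFix_mulLeft {f : A → ℂ} (a : A)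
    (hf : MemFixQuot ({⊥} : Set (Subgroup A)) f) :
    MemFixQuot ({⊥} : Set (Subgroup A)) (fun x => f (a⁻¹ * x)) := by
  refine ⟨⟨hf.1.choose, fun x => hf.1.choose_spec _⟩, ?_⟩
  intro h
  have := memC0_mulLeft a⁻¹ (hf.2 h)
  simpa [mul_assoc] using this

lemma phi_congr {φ : (A → ℂ) → ℂ}
    (hφ : IsInvariantStateRel ({⊥} : Set (Subgroup A)) φ)
    {f₁ f₂ : A → ℂ}
    (h₁ : MemFixQuot ({⊥} : Set (Subgroup A)) f₁)
    (hd : MemC0Rel ({⊥} : Set (Subgroup A)) (fun x => f₂ x - f₁ x)) :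
    φ f₂ = φ f₁ := by
  have hf₂ : f₂ = f₁ + fun x => f₂ x - f₁ x := by funext x; simp
  rw [hf₂, hφ.1 _ _ h₁ (memFix_of_memC0 hd), hφ.2.2.2.2.1 _ hd, add_zero]

lemma exists_state_prod
    (hA : ∃ φ : (A → ℂ) → ℂ, IsInvariantStateRel ({⊥} : Set (Subgroup A)) φ) :
    ∃ Φ : (A × B → ℂ) → ℂ, IsInvariantStateRel ({⊥} : Set (Subgroup (A × B))) Φ := by
  obtain ⟨φ, hφ⟩ := hA
  refine ⟨fun F => φ (fun x => F (x, 1)), ?_, ?_, ?_, ?_, ?_, ?_⟩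
  · intro F₁ F₂ h₁ h₂
    exact hφ.1 _ _ (memFix_restrict 1 h₁) (memFix_restrict 1 h₂)
  · intro c F hF
    exact hφ.2.1 c _ (memFix_restrict 1 hF)
  · intro F hF
    exact hφ.2.2.1 _ (memFix_restrict 1 hF)
  · exact hφ.2.2.2.1
  · intro F hF
    exact hφ.2.2.2.2.1 _ (memC0_restrict 1 hF)
  · rintro ⟨h₁, h₂⟩ F hF
    show φ (fun x => F (h₁⁻¹ * x, h₂⁻¹ * 1)) = φ (fun x => F (x, 1))
    have key : φ (fun x => F (x, h₂⁻¹ * 1)) = φ (fun x => F (x, 1)) := by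
      refine phi_congr hφ (memFix_restrict 1 hF) ?_
      have := memC0_restrict (A := A) (B := B) 1 (hF.2 (1, h₂⁻¹ * 1))
      simpa using this
    calc φ (fun x => F (h₁⁻¹ * x, h₂⁻¹ * 1))
        = φ (fun x => F (x, h₂⁻¹ * 1)) :=
          hφ.2.2.2.2.2 h₁ _ (memFix_restrict (h₂⁻¹ * 1) hF)
      _ = φ (fun x => F (x, 1)) := key

lemma exists_state_mulEquiv (e : A ≃* B)
    (hA : ∃ φ : (A → ℂ) → ℂ, IsInvariantStateRel ({⊥} : Set (Subgroup A)) φ) :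
    ∃ φ : (B → ℂ) → ℂ, IsInvariantStateRel ({⊥} : Set (Subgroup B)) φ := by
  obtain ⟨φ, hφ⟩ := hA
  have hc0 : ∀ {f : B → ℂ}, MemC0Rel ({⊥} : Set (Subgroup B)) f →
      MemC0Rel ({⊥} : Set (Subgroup A)) (fun x => f (e x)) := by
    rintro f ⟨⟨C, hC⟩, hf0⟩
    refine ⟨⟨C, fun x => hC _⟩, ?_⟩
    intro g hg
    refine hf0 (fun n => e (g n)) ?_
    rw [tendstoInfty_bot_iff] at hg ⊢
    intro t
    refine (hg (e.symm t)).subset ?_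
    intro n hn
    simp only [Set.mem_setOf_eq] at hn ⊢
    simp [← hn]
  have hfix : ∀ {f : B → ℂ}, MemFixQuot ({⊥} : Set (Subgroup B)) f →
      MemFixQuot ({⊥} : Set (Subgroup A)) (fun x => f (e x)) := by
    rintro f ⟨⟨C, hC⟩, hf⟩
    refine ⟨⟨C, fun x => hC _⟩, ?_⟩
    intro h
    have := hc0 (hf (e h))
    simpa using this
  refine ⟨fun f => φ (fun x => f (e x)), ?_, ?_, ?_, ?_, ?_, ?_⟩
  · intro f₁ f₂ h₁ h₂
    exact hφ.1 _ _ (hfix h₁) (hfix h₂)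
  · intro c f hf
    exact hφ.2.1 c _ (hfix hf)
  · intro f hf
    exact hφ.2.2.1 _ (hfix hf)
  · exact hφ.2.2.2.1
  · intro f hf
    exact hφ.2.2.2.2.1 _ (hc0 hf)
  · intro b f hf
    have := hφ.2.2.2.2.2 (e.symm b) _ (hfix hf)
    simp only [map_mul, map_inv, MulEquiv.apply_symm_apply] at this
    convert this using 2

end Aux

/-- If the direct product `G₁ × G₂` of countable discrete groups is properly proximal,
then both `G₁` and `G₂` are properly proximal. -/
theorem properlyProximal_of_properlyProximal_prod
    {G₁ : Type u} {G₂ : Type v} [Group G₁] [Group G₂] [Countable G₁] [Countable G₂]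
    (h : ProperlyProximal (G₁ × G₂)) :
    ProperlyProximal G₁ ∧ ProperlyProximal G₂ := by
  constructor
  · intro hex
    exact h (exists_state_prod hex)
  · intro hex
    exact h (exists_state_mulEquiv (MulEquiv.prodComm : G₂ × G₁ ≃* G₁ × G₂)
      (exists_state_prod hex))

end PPx
end

section
/- Let Γ(G) be a graph product of nontrivial countable groups over a finite simple graph Γ, and let T₁, T₂ ⊆ V(Γ). For any g, h ∈ Γ(G) there exist finitely many elements c₁, d₁, …, c_n, d_n ∈ Γ(G) such that Γ_{T₁}(G) ∩ g Γ_{T₂}(G) h ⊆ ⋃_{i=1}^n c_i Γ_{T₁∩T₂}(G) d_i. -/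
open scoped Pointwise ComplexOrder

namespace PPx

universe u v w

/-- The set of commutation relators defining a graph product. -/
def graphProductRels {V : Type u} (Γ : SimpleGraph V) (Gv : V → Type v)
    [∀ a, Group (Gv a)] : Set (Monoid.CoprodI Gv) :=
  {x | ∃ u w : V, Γ.Adj u w ∧ ∃ (g : Gv u) (h : Gv w),
    x = Monoid.CoprodI.of g * Monoid.CoprodI.of h *
        (Monoid.CoprodI.of g)⁻¹ * (Monoid.CoprodI.of h)⁻¹}

/-- The graph product `Γ(G)` of the family of groups `Gv` over the graph `Γ`. -/
def GraphProduct {V : Type u} (Γ : SimpleGraph V) (Gv : V → Type v)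
    [∀ a, Group (Gv a)] : Type (max u v) :=
  Monoid.CoprodI Gv ⧸ Subgroup.normalClosure (graphProductRels Γ Gv)

instance {V : Type u} (Γ : SimpleGraph V) (Gv : V → Type v) [∀ a, Group (Gv a)] :
    Group (GraphProduct Γ Gv) :=
  inferInstanceAs (Group (Monoid.CoprodI Gv ⧸ Subgroup.normalClosure (graphProductRels Γ Gv)))

/-- The graph distance between two vertices, valued in `ℕ∞` (`⊤` if not connected). -/
noncomputable def graphDist {V : Type u} (Γ : SimpleGraph V) (a b : V) : ℕ∞ :=
  ⨅ p : Γ.Walk a b, (p.length : ℕ∞)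

/-- The radius of a graph, `r(Γ) = min_v max_w d(v,w)`, valued in `ℕ∞`. -/
noncomputable def graphRadius {V : Type u} (Γ : SimpleGraph V) : ℕ∞ :=
  ⨅ a : V, ⨆ b : V, graphDist Γ a b


/-- The canonical homomorphism `G_a →* Γ(G)`. -/
def GraphProduct.of {V : Type u} (Γ : SimpleGraph V) (Gv : V → Type v)
    [∀ a, Group (Gv a)] (a : V) : Gv a →* GraphProduct Γ Gv :=
  (QuotientGroup.mk' (Subgroup.normalClosure (graphProductRels Γ Gv))).comp Monoid.CoprodI.of

/-- For `T ⊆ V(Γ)`, the subgroup `Γ_T(G)` of `Γ(G)` generated by the vertex groups `G_v`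
with `v ∈ T`. -/
def GraphProduct.vertexSubgroup {V : Type u} (Γ : SimpleGraph V) (Gv : V → Type v)
    [∀ a, Group (Gv a)] (T : Set V) : Subgroup (GraphProduct Γ Gv) :=
  ⨆ a ∈ T, (GraphProduct.of Γ Gv a).range

section Retr
variable {V : Type u} (Γ : SimpleGraph V) (Gv : V → Type v) [∀ a, Group (Gv a)]

theorem commute_of {u w : V} (hadj : Γ.Adj u w) (g : Gv u) (h : Gv w) :
    Commute (GraphProduct.of Γ Gv u g) (GraphProduct.of Γ Gv w h) := by
  have hmem : (Monoid.CoprodI.of g * Monoid.CoprodI.of h *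
      (Monoid.CoprodI.of g)⁻¹ * (Monoid.CoprodI.of h)⁻¹) ∈
      Subgroup.normalClosure (graphProductRels Γ Gv) :=
    Subgroup.subset_normalClosure ⟨u, w, hadj, g, h, rfl⟩
  have h1 : (QuotientGroup.mk' (Subgroup.normalClosure (graphProductRels Γ Gv)))
      (Monoid.CoprodI.of g * Monoid.CoprodI.of h *
      (Monoid.CoprodI.of g)⁻¹ * (Monoid.CoprodI.of h)⁻¹) = 1 :=
    (QuotientGroup.eq_one_iff _).2 hmem
  simp only [map_mul, map_inv] at h1
  rw [← commutatorElement_eq_one_iff_commute]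
  exact h1

open Classical in
noncomputable def retr (T : Set V) : GraphProduct Γ Gv →* GraphProduct Γ Gv :=
  QuotientGroup.lift _ (Monoid.CoprodI.lift (fun v =>
    if _ : v ∈ T then GraphProduct.of Γ Gv v else 1))
  (by
    intro x hx
    refine Subgroup.normalClosure_le_normal (N := MonoidHom.ker _) ?_ hx
    rintro y ⟨u, w, hadj, g, h, rfl⟩
    simp only [SetLike.mem_coe, MonoidHom.mem_ker, map_mul, map_inv, Monoid.CoprodI.lift_of]
    by_cases hu : u ∈ T <;> by_cases hw : w ∈ T <;>
      simp [hu, hw]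
    have := commute_of Γ Gv hadj g h
    rw [← commutatorElement_eq_one_iff_commute] at this
    simpa [commutatorElement_def, mul_assoc] using this)

open Classical in
theorem retr_of (T : Set V) (a : V) (x : Gv a) :
    retr Γ Gv T (GraphProduct.of Γ Gv a x) =
      if a ∈ T then GraphProduct.of Γ Gv a x else 1 := by
  show retr Γ Gv T ((QuotientGroup.mk' _) (Monoid.CoprodI.of x)) = _
  rw [retr]
  show (Monoid.CoprodI.lift fun v =>
      if _ : v ∈ T then GraphProduct.of Γ Gv v else 1) (Monoid.CoprodI.of x) = _
  rw [Monoid.CoprodI.lift_of]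
  split <;> simp_all

theorem retr_fix (T : Set V) {x : GraphProduct Γ Gv}
    (hx : x ∈ GraphProduct.vertexSubgroup Γ Gv T) : retr Γ Gv T x = x := by
  have hle : GraphProduct.vertexSubgroup Γ Gv T ≤
      MonoidHom.eqLocus (retr Γ Gv T) (MonoidHom.id _) := by
    refine iSup_le fun a => iSup_le fun ha => ?_
    rintro y ⟨z, rfl⟩
    show retr Γ Gv T (GraphProduct.of Γ Gv a z) = GraphProduct.of Γ Gv a z
    rw [retr_of]; simp [ha]
  exact hle hx

theorem retr_mem (T₁ T₂ : Set V) {x : GraphProduct Γ Gv}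
    (hx : x ∈ GraphProduct.vertexSubgroup Γ Gv T₂) :
    retr Γ Gv T₁ x ∈ GraphProduct.vertexSubgroup Γ Gv (T₁ ∩ T₂) := by
  have hle : GraphProduct.vertexSubgroup Γ Gv T₂ ≤
      Subgroup.comap (retr Γ Gv T₁) (GraphProduct.vertexSubgroup Γ Gv (T₁ ∩ T₂)) := by
    refine iSup_le fun a => iSup_le fun ha => ?_
    rintro y ⟨z, rfl⟩
    simp only [Subgroup.mem_comap]
    rw [retr_of]
    split
    · next hmem =>
      exact (le_iSup₂ (f := fun a (_ : a ∈ T₁ ∩ T₂) => (GraphProduct.of Γ Gv a).range)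
        a ⟨hmem, ha⟩) ⟨z, rfl⟩
    · exact Subgroup.one_mem _
  exact hle hx

end Retr

/-- In a graph product of nontrivial countable groups, for any `T₁, T₂ ⊆ V(Γ)` and
`g, h ∈ Γ(G)` there are finitely many elements `cᵢ, dᵢ` with
`Γ_{T₁}(G) ∩ g Γ_{T₂}(G) h ⊆ ⋃ᵢ cᵢ Γ_{T₁ ∩ T₂}(G) dᵢ`. -/
theorem vertexSubgroup_inter_smul_subset_iUnion
    {V : Type u} [Fintype V] (Γ : SimpleGraph V) (Gv : V → Type v)
    [∀ a, Group (Gv a)] [∀ a, Nontrivial (Gv a)] [∀ a, Countable (Gv a)]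
    (T₁ T₂ : Set V) (g h : GraphProduct Γ Gv) :
    ∃ (n : ℕ) (c d : Fin n → GraphProduct Γ Gv),
      (GraphProduct.vertexSubgroup Γ Gv T₁ : Set (GraphProduct Γ Gv)) ∩
          ((fun x => g * x * h) '' (GraphProduct.vertexSubgroup Γ Gv T₂ : Set (GraphProduct Γ Gv))) ⊆
        ⋃ i : Fin n, (fun x => c i * x * d i) ''
          (GraphProduct.vertexSubgroup Γ Gv (T₁ ∩ T₂) : Set (GraphProduct Γ Gv)) := by
  refine ⟨1, fun _ => retr Γ Gv T₁ g, fun _ => retr Γ Gv T₁ h, ?_⟩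
  rintro x ⟨hx1, a, ha, rfl⟩
  refine Set.mem_iUnion.2 ⟨0, retr Γ Gv T₁ a, retr_mem Γ Gv T₁ T₂ ha, ?_⟩
  have hfix := retr_fix Γ Gv T₁ hx1
  simp only [map_mul] at hfix
  exact hfix

end PPx
end

section
/- Let Γ(G) be a graph product of nontrivial countable groups over a finite simple graph Γ with vertex set {v₁, …, v_n}. For any elements s₁, t₁, …, s_n, t_n ∈ Γ(G), the intersection of double cosets ⋂_{i=1}^n s_i Γ_{S_{v_i}}(G) t_i is a finite set, where S_v denotes the link of the vertex v. -/
open scoped Pointwise ComplexOrder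

namespace PPx

universe u v w

/-!
An element `z` with `gₐ⁻¹ z gₐ ∈ Γ_{S_a}(G)` for every vertex `a` is trivial. Let `π_T` be the
retraction of `Γ(G)` onto `Γ_T(G)` that kills the vertex groups outside `T`; one shows
`π_T z = 1` by induction on `T`. Passing from `T` to `T ∪ {v}`, the element
`w = π_{T ∪ {v}} (g_v⁻¹ z g_v)` lies in `Γ_{S_v ∩ (T ∪ {v})}(G) ≤ Γ_T(G)` because `v ∉ S_v`,
so `w = π_T w = π_T (g_v⁻¹ z g_v) = 1`. Taking `T = V(Γ)` gives `z = 1`. Hence any two elements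
`x, y` of the intersection of double cosets agree, since `s_a⁻¹ (y x⁻¹) s_a ∈ Γ_{S_a}(G)`:
the intersection has at most one element.
-/

namespace GraphProduct

section

variable {V : Type u} (Γ : SimpleGraph V) (Gv : V → Type v) [∀ a, Group (Gv a)]

theorem of_commute {a b : V} (hab : Γ.Adj a b) (g : Gv a) (k : Gv b) :
    Commute (of Γ Gv a g) (of Γ Gv b k) := by
  rw [← commutatorElement_eq_one_iff_commute, commutatorElement_def]
  exact (QuotientGroup.eq_one_iff _).mpr
    (Subgroup.subset_normalClosure ⟨a, b, hab, g, k, rfl⟩)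

def lift {H : Type w} [Group H] (f : ∀ a, Gv a →* H)
    (hf : ∀ a b, Γ.Adj a b → ∀ (g : Gv a) (k : Gv b), Commute (f a g) (f b k)) :
    GraphProduct Γ Gv →* H :=
  QuotientGroup.lift _ (Monoid.CoprodI.lift f) <| Subgroup.normalClosure_le_normal <| by
    rintro _ ⟨a, b, hab, g, k, rfl⟩
    have h := commutatorElement_eq_one_iff_commute.mpr (hf a b hab g k)
    rw [commutatorElement_def] at h
    simpa only [SetLike.mem_coe, MonoidHom.mem_ker, map_mul, map_inv, Monoid.CoprodI.lift_of]

@[simp]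
theorem lift_of {H : Type w} [Group H] (f : ∀ a, Gv a →* H)
    (hf : ∀ a b, Γ.Adj a b → ∀ (g : Gv a) (k : Gv b), Commute (f a g) (f b k))
    (a : V) (g : Gv a) : lift Γ Gv f hf (of Γ Gv a g) = f a g :=
  Monoid.CoprodI.lift_of f g

variable {Γ Gv} in
@[ext]
theorem hom_ext {H : Type w} [Group H] {φ ψ : GraphProduct Γ Gv →* H}
    (h : ∀ a, φ.comp (of Γ Gv a) = ψ.comp (of Γ Gv a)) : φ = ψ :=
  QuotientGroup.monoidHom_ext _ (Monoid.CoprodI.ext_hom _ _ h)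

theorem of_mem_vertexSubgroup {T : Set V} {a : V} (ha : a ∈ T) (g : Gv a) :
    of Γ Gv a g ∈ vertexSubgroup Γ Gv T :=
  Subgroup.mem_iSup_of_mem a (Subgroup.mem_iSup_of_mem ha ⟨g, rfl⟩)

theorem vertexSubgroup_le {T : Set V} {K : Subgroup (GraphProduct Γ Gv)}
    (h : ∀ a ∈ T, ∀ g : Gv a, of Γ Gv a g ∈ K) : vertexSubgroup Γ Gv T ≤ K :=
  iSup₂_le fun a ha => by
    rintro _ ⟨g, rfl⟩
    exact h a ha g

theorem vertexSubgroup_mono {S T : Set V} (h : S ⊆ T) :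
    vertexSubgroup Γ Gv S ≤ vertexSubgroup Γ Gv T :=
  vertexSubgroup_le Γ Gv fun _ ha => of_mem_vertexSubgroup Γ Gv (h ha)

open scoped Classical in
noncomputable def retraction (T : Set V) : GraphProduct Γ Gv →* GraphProduct Γ Gv :=
  lift Γ Gv (fun a => if a ∈ T then of Γ Gv a else 1) fun a b hab g k => by
    by_cases ha : a ∈ T <;> by_cases hb : b ∈ T <;>
      simp only [ha, hb, if_true, if_false, MonoidHom.one_apply, Commute.one_left,
        Commute.one_right, of_commute Γ Gv hab]

variable {Γ Gv}

theorem retraction_of_of_mem {T : Set V} {a : V} (ha : a ∈ T) (g : Gv a) :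
    retraction Γ Gv T (of Γ Gv a g) = of Γ Gv a g := by
  simp [retraction, ha]

theorem retraction_of_of_notMem {T : Set V} {a : V} (ha : a ∉ T) (g : Gv a) :
    retraction Γ Gv T (of Γ Gv a g) = 1 := by
  simp [retraction, ha]

theorem retraction_univ : retraction Γ Gv Set.univ = MonoidHom.id _ :=
  hom_ext fun a => MonoidHom.ext fun g => retraction_of_of_mem (Set.mem_univ a) g

theorem retraction_empty : retraction Γ Gv ∅ = 1 :=
  hom_ext fun a => MonoidHom.ext fun g => retraction_of_of_notMem (Set.notMem_empty a) g

theorem retraction_comp_retraction_of_subset {S T : Set V} (h : S ⊆ T) :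
    (retraction Γ Gv S).comp (retraction Γ Gv T) = retraction Γ Gv S := by
  refine hom_ext fun a => MonoidHom.ext fun g => ?_
  by_cases haS : a ∈ S
  · simp [retraction_of_of_mem (h haS), retraction_of_of_mem haS]
  by_cases haT : a ∈ T
  · simp [retraction_of_of_mem haT, retraction_of_of_notMem haS]
  · simp [retraction_of_of_notMem haT, retraction_of_of_notMem haS]

theorem retraction_eq_self {T : Set V} {x : GraphProduct Γ Gv}
    (hx : x ∈ vertexSubgroup Γ Gv T) : retraction Γ Gv T x = x :=
  vertexSubgroup_le (K := MonoidHom.eqLocus (retraction Γ Gv T) (MonoidHom.id _)) Γ Gv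
    (fun _ ha g => retraction_of_of_mem ha g) hx

theorem retraction_mem_vertexSubgroup_inter {S : Set V} (T : Set V) {x : GraphProduct Γ Gv}
    (hx : x ∈ vertexSubgroup Γ Gv S) : retraction Γ Gv T x ∈ vertexSubgroup Γ Gv (S ∩ T) := by
  refine vertexSubgroup_le (K := (vertexSubgroup Γ Gv (S ∩ T)).comap (retraction Γ Gv T)) Γ Gv
    (fun a ha g => ?_) hx
  by_cases haT : a ∈ T
  · simpa [retraction_of_of_mem haT] using of_mem_vertexSubgroup Γ Gv (T := S ∩ T) ⟨ha, haT⟩ g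
  · simp [retraction_of_of_notMem haT]

theorem retraction_eq_one_of_forall_conj_mem {g : V → GraphProduct Γ Gv} {z : GraphProduct Γ Gv}
    (hz : ∀ a, (g a)⁻¹ * z * g a ∈ vertexSubgroup Γ Gv (Γ.neighborSet a))
    {T : Set V} (hT : T.Finite) : retraction Γ Gv T z = 1 := by
  induction T, hT using Set.Finite.induction_on with
  | empty => rw [retraction_empty, MonoidHom.one_apply]
  | @insert v T _ _ ih =>
    set π := retraction Γ Gv (insert v T)
    have hsub : Γ.neighborSet v ∩ insert v T ⊆ T := fun a ⟨hav, ha⟩ =>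
      ha.resolve_left (by rintro rfl; exact Γ.irrefl hav)
    have hw : π ((g v)⁻¹ * z * g v) ∈ vertexSubgroup Γ Gv T :=
      vertexSubgroup_mono Γ Gv hsub (retraction_mem_vertexSubgroup_inter _ (hz v))
    have hw1 : π ((g v)⁻¹ * z * g v) = 1 := by
      rw [← retraction_eq_self hw, ← MonoidHom.comp_apply,
        retraction_comp_retraction_of_subset (Set.subset_insert v T)]
      simp [ih]
    rwa [map_mul, map_mul, map_inv, mul_eq_one_iff_eq_inv, mul_eq_left] at hw1

theorem eq_one_of_forall_conj_mem_vertexSubgroup_neighborSet [Finite V]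
    {g : V → GraphProduct Γ Gv} {z : GraphProduct Γ Gv}
    (hz : ∀ a, (g a)⁻¹ * z * g a ∈ vertexSubgroup Γ Gv (Γ.neighborSet a)) : z = 1 := by
  simpa [retraction_univ] using retraction_eq_one_of_forall_conj_mem hz Set.finite_univ

theorem subsingleton_iInter_doubleCoset_neighborSet [Finite V] (s t : V → GraphProduct Γ Gv) :
    (⋂ a : V, (fun x => s a * x * t a) ''
      (vertexSubgroup Γ Gv (Γ.neighborSet a) : Set (GraphProduct Γ Gv))).Subsingleton := by
  intro x hx y hy
  simp only [Set.mem_iInter, Set.mem_image, SetLike.mem_coe] at hx hy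
  refine (mul_inv_eq_one.mp (eq_one_of_forall_conj_mem_vertexSubgroup_neighborSet
    (g := s) fun a => ?_)).symm
  obtain ⟨h, hh, rfl⟩ := hx a
  obtain ⟨k, hk, hyk⟩ := hy a
  have : (s a)⁻¹ * (y * (s a * h * t a)⁻¹) * s a = k * h⁻¹ := by rw [← hyk]; group
  exact this ▸ mul_mem hk (inv_mem hh)

end

end GraphProduct

theorem iInter_doubleCoset_linkSubgroup_finite_general
    {V : Type u} [Fintype V] (Γ : SimpleGraph V) (Gv : V → Type v)
    [∀ a, Group (Gv a)]
    (s t : V → GraphProduct Γ Gv) :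
    (⋂ a : V, (fun x => s a * x * t a) ''
      (GraphProduct.vertexSubgroup Γ Gv (Γ.neighborSet a) : Set (GraphProduct Γ Gv))).Finite :=
  (GraphProduct.subsingleton_iInter_doubleCoset_neighborSet s t).finite

/-- In a graph product of nontrivial countable groups over a finite simple graph with
vertices `v₁, …, vₙ`, any intersection of double cosets `⋂ᵢ sᵢ Γ_{S_{vᵢ}}(G) tᵢ` of the
link subgroups is finite. -/
theorem iInter_doubleCoset_linkSubgroup_finite
    {V : Type u} [Fintype V] (Γ : SimpleGraph V) (Gv : V → Type v)
    [∀ a, Group (Gv a)] [∀ a, Nontrivial (Gv a)] [∀ a, Countable (Gv a)]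
    (s t : V → GraphProduct Γ Gv) :
    (⋂ a : V, (fun x => s a * x * t a) ''
      (GraphProduct.vertexSubgroup Γ Gv (Γ.neighborSet a) : Set (GraphProduct Γ Gv))).Finite :=
  iInter_doubleCoset_linkSubgroup_finite_general Γ Gv s t

end PPx
end

section
/- Let G = G₁ *_H G₂ be an amalgamated free product of countable groups, fix a transversal T₁ (resp. T₂) for the right cosets {Hx : x ∈ G₁} (resp. {Hx : x ∈ G₂}) containing the identity, and let p₁ : G → {0,1} be the indicator function of the set of elements whose normal form h t₁ t₂ ⋯ t_k begins with a letter t₁ ∈ T₁∖{1}. Then for every g ∈ G and every sequence (g_n) in G going to infinity relative to {H}, one has p₁(g_n) − p₁(g_n g) → 0; equivalently, the image of p₁ in ℓ∞(G)/c₀(G,{H}) is fixed by the right translation action of G. -/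
open scoped Pointwise ComplexOrder

namespace PPx

universe u v w

/-- `(G, j₁, j₂)` is the amalgamated free product `G₁ *_H G₂` of the injections
`f₁ : H →* G₁` and `f₂ : H →* G₂`: the square commutes and `G` satisfies the universal
property of the pushout of `f₁` and `f₂`. -/
def IsAmalgamatedProduct {H G₁ G₂ G : Type*} [Group H] [Group G₁] [Group G₂] [Group G]
    (f₁ : H →* G₁) (f₂ : H →* G₂) (j₁ : G₁ →* G) (j₂ : G₂ →* G) : Prop :=
  j₁.comp f₁ = j₂.comp f₂ ∧
  ∀ (K : Type w) (_ : Group K) (k₁ : G₁ →* K) (k₂ : G₂ →* K),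
    k₁.comp f₁ = k₂.comp f₂ → ∃! k : G →* K, k.comp j₁ = k₁ ∧ k.comp j₂ = k₂


/-- `l` is an alternating word in the letter sets `A` and `B`: every letter lies in
`A ∪ B` and consecutive letters come from different sets. -/
def IsAltWord {G : Type*} (A B : Set G) (l : List G) : Prop :=
  (∀ x ∈ l, x ∈ A ∪ B) ∧ l.Chain' (fun x y => (x ∈ A ∧ y ∈ B) ∨ (x ∈ B ∧ y ∈ A))

/-!
Write `K` for the image of `H` and `X` for the support of `p₁`: the elements `k t₁ ⋯ t_m`
with `k ∈ K` and `t₁ ⋯ t_m` an alternating product of letters from `A = T₁ ∖ {1}` and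
`B = T₂ ∖ {1}` starting in `A`. Since `a k ∈ K a'` for a letter `a` and some letter `a'` of
the same type, right multiplication by `s ∈ G₁ ∪ G₂` maps `X` into `X ∪ K`: `s` merges with
or is appended to the last letter, and the resulting factor in `K` travels to the front
without changing letter types. So `x ∈ X ↔ x s ∈ X` can only fail on `K ∪ K s⁻¹`, which a
sequence going to infinity relative to `K` eventually leaves. The `g` along which membership
in `X` is eventually preserved form a subgroup; it contains `G₁ ∪ G₂`, which generates `G`.
The amalgam enters through two facts: `G₁, G₂` embed in `G` with intersection `H` (read off
from `Monoid.PushoutI`), and they generate `G`.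
-/

theorem Monoid.PushoutI.small {ι : Type*} {M : ι → Type*} {N : Type*} [∀ i, Monoid (M i)]
    [Monoid N] (φ : ∀ i, N →* M i) [Small.{w} ι] [∀ i, Small.{w} (M i)] [Small.{w} N] :
    Small.{w} (Monoid.PushoutI φ) := by
  refine small_of_surjective (f := fun l : List ((Σ i, M i) ⊕ N) =>
    (l.map (Sum.elim (fun p => Monoid.PushoutI.of p.1 p.2) (Monoid.PushoutI.base φ))).prod) ?_
  intro x
  induction x using Monoid.PushoutI.induction_on with
  | of i g => exact ⟨[.inl ⟨i, g⟩], by simp⟩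
  | base h => exact ⟨[.inr h], by simp⟩
  | mul x y hx hy =>
    obtain ⟨lx, rfl⟩ := hx
    obtain ⟨ly, rfl⟩ := hy
    exact ⟨lx ++ ly, by simp⟩

-- `Monoid.PushoutI` takes a family of groups living in a single universe.
def pairFamily (G₁ : Type u) (G₂ : Type v) : Bool → Type (max u v)
  | true => ULift.{v} G₁
  | false => ULift.{u} G₂

instance (G₁ : Type u) (G₂ : Type v) [Group G₁] [Group G₂] :
    ∀ b, Group (pairFamily G₁ G₂ b)
  | true => inferInstanceAs (Group (ULift G₁))
  | false => inferInstanceAs (Group (ULift G₂))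

instance (G₁ : Type u) (G₂ : Type v) [Countable G₁] [Countable G₂] :
    ∀ b, Countable (pairFamily G₁ G₂ b)
  | true => inferInstanceAs (Countable (ULift G₁))
  | false => inferInstanceAs (Countable (ULift G₂))

section PairPushout

variable {H : Type*} {G₁ : Type u} {G₂ : Type v} [Group H] [Group G₁] [Group G₂]
  (f₁ : H →* G₁) (f₂ : H →* G₂)

def pairHom : ∀ b, H →* pairFamily G₁ G₂ b
  | true => MulEquiv.ulift.symm.toMonoidHom.comp f₁
  | false => MulEquiv.ulift.symm.toMonoidHom.comp f₂

def pairOf₁ : G₁ →* Monoid.PushoutI (pairHom f₁ f₂) :=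
  (Monoid.PushoutI.of (φ := pairHom f₁ f₂) true).comp MulEquiv.ulift.symm.toMonoidHom

def pairOf₂ : G₂ →* Monoid.PushoutI (pairHom f₁ f₂) :=
  (Monoid.PushoutI.of (φ := pairHom f₁ f₂) false).comp MulEquiv.ulift.symm.toMonoidHom

theorem pairOf₁_comp_eq_pairOf₂_comp : (pairOf₁ f₁ f₂).comp f₁ = (pairOf₂ f₁ f₂).comp f₂ := by
  ext h
  exact (Monoid.PushoutI.of_apply_eq_base (pairHom f₁ f₂) true h).trans
    (Monoid.PushoutI.of_apply_eq_base (pairHom f₁ f₂) false h).symm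

variable {f₁ f₂}

theorem pairHom_injective (hf₁ : Function.Injective f₁) (hf₂ : Function.Injective f₂) :
    ∀ b, Function.Injective (pairHom f₁ f₂ b)
  | true => MulEquiv.ulift.symm.injective.comp hf₁
  | false => MulEquiv.ulift.symm.injective.comp hf₂

theorem pairOf₁_injective (hf₁ : Function.Injective f₁) (hf₂ : Function.Injective f₂) :
    Function.Injective (pairOf₁ f₁ f₂) :=
  (Monoid.PushoutI.of_injective (pairHom_injective hf₁ hf₂) true).comp
    MulEquiv.ulift.symm.injective

theorem pairOf₂_injective (hf₁ : Function.Injective f₁) (hf₂ : Function.Injective f₂) :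
    Function.Injective (pairOf₂ f₁ f₂) :=
  (Monoid.PushoutI.of_injective (pairHom_injective hf₁ hf₂) false).comp
    MulEquiv.ulift.symm.injective

theorem mem_range_of_pairOf₁_eq_pairOf₂ (hf₁ : Function.Injective f₁)
    (hf₂ : Function.Injective f₂) {x : G₁} {y : G₂}
    (h : pairOf₁ f₁ f₂ x = pairOf₂ f₁ f₂ y) : x ∈ f₁.range := by
  have hmem : pairOf₁ f₁ f₂ x ∈ (Monoid.PushoutI.of (φ := pairHom f₁ f₂) true).range ⊓
      (Monoid.PushoutI.of false).range := ⟨⟨_, rfl⟩, ⟨_, h.symm⟩⟩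
  rw [Monoid.PushoutI.inf_of_range_eq_base_range (pairHom_injective hf₁ hf₂) (by decide)]
    at hmem
  obtain ⟨k, hk⟩ := hmem
  refine ⟨k, pairOf₁_injective hf₁ hf₂ ?_⟩
  rw [← hk, ← Monoid.PushoutI.of_apply_eq_base _ true]
  rfl

end PairPushout

namespace IsAmalgamatedProduct

variable {H G₁ G₂ G : Type*} [Group H] [Group G₁] [Group G₂] [Group G]
  {f₁ : H →* G₁} {f₂ : H →* G₂} {j₁ : G₁ →* G} {j₂ : G₂ →* G}

theorem exists_lift (hG : IsAmalgamatedProduct.{w} f₁ f₂ j₁ j₂) {K : Type*} [Group K]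
    [Small.{w} K] (k₁ : G₁ →* K) (k₂ : G₂ →* K) (hk : k₁.comp f₁ = k₂.comp f₂) :
    ∃ k : G →* K, k.comp j₁ = k₁ ∧ k.comp j₂ = k₂ := by
  let E : Shrink.{w} K ≃* K := Shrink.mulEquiv
  obtain ⟨k, ⟨hk₁, hk₂⟩, -⟩ := hG.2 (Shrink.{w} K) _ (E.symm.toMonoidHom.comp k₁)
    (E.symm.toMonoidHom.comp k₂) (by rw [MonoidHom.comp_assoc, hk, MonoidHom.comp_assoc])
  refine ⟨E.toMonoidHom.comp k, ?_, ?_⟩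
  · rw [MonoidHom.comp_assoc, hk₁, ← MonoidHom.comp_assoc]; ext; simp
  · rw [MonoidHom.comp_assoc, hk₂, ← MonoidHom.comp_assoc]; ext; simp

theorem hom_ext (hG : IsAmalgamatedProduct.{w} f₁ f₂ j₁ j₂) {K : Type*} [Group K]
    [Small.{w} K] {k k' : G →* K} (h₁ : k.comp j₁ = k'.comp j₁)
    (h₂ : k.comp j₂ = k'.comp j₂) : k = k' := by
  let E : Shrink.{w} K ≃* K := Shrink.mulEquiv
  have hcompat : (E.symm.toMonoidHom.comp (k'.comp j₁)).comp f₁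
      = (E.symm.toMonoidHom.comp (k'.comp j₂)).comp f₂ := by
    simp only [MonoidHom.comp_assoc, hG.1]
  have := (hG.2 (Shrink.{w} K) _ _ _ hcompat).unique
    (y₁ := E.symm.toMonoidHom.comp k) (y₂ := E.symm.toMonoidHom.comp k')
    ⟨by rw [MonoidHom.comp_assoc, h₁], by rw [MonoidHom.comp_assoc, h₂]⟩ ⟨rfl, rfl⟩
  ext x
  exact E.symm.injective (DFunLike.congr_fun this x)

theorem range_sup_range_eq_top (hG : IsAmalgamatedProduct.{w} f₁ f₂ j₁ j₂) [Countable G] :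
    j₁.range ⊔ j₂.range = ⊤ := by
  classical
  set C := j₁.range ⊔ j₂.range
  refine eq_top_iff.2 fun g _ => by_contra fun hg => ?_
  have : Countable (G ⧸ C) := Quotient.countable
  have : Small.{w} (Equiv.Perm (Option (G ⧸ C))) :=
    have : Small.{w} (Option (G ⧸ C)) := Countable.toSmall _
    small_of_injective (f := fun p : Equiv.Perm (Option (G ⧸ C)) => (p : _ → _))
      DFunLike.coe_injective
  let ρ : G →* Equiv.Perm (Option (G ⧸ C)) := MulAction.toPermHom _ _
  let τ := Equiv.swap none (some ((1 : G) : G ⧸ C))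
  have hρ : ∀ x, ρ x (some ((1 : G) : G ⧸ C)) = some (x : G ⧸ C) := by
    intro x
    rw [MulAction.toPermHom_apply, MulAction.toPerm_apply, Option.smul_some,
      MulAction.Quotient.smul_mk, smul_eq_mul, mul_one]
  -- `ρ` and its conjugate by `τ` agree on `C`, which fixes both points swapped by `τ`,
  -- but not at `g`, which moves `some 1`.
  have hC : ∀ c ∈ C, τ * ρ c * τ⁻¹ = ρ c := by
    intro c hc
    rw [mul_inv_eq_iff_eq_mul, eq_comm, Equiv.mul_swap_eq_swap_mul, hρ,
      (QuotientGroup.eq (a := c) (b := 1)).2 (by simpa using hc)]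
    rfl
  have hconj : (MulAut.conj τ).toMonoidHom.comp ρ = ρ := by
    refine hG.hom_ext ?_ ?_ <;> ext x : 1
    · exact hC _ (Subgroup.mem_sup_left ⟨x, rfl⟩)
    · exact hC _ (Subgroup.mem_sup_right ⟨x, rfl⟩)
  have hg1 : (g : G ⧸ C) ≠ ((1 : G) : G ⧸ C) := fun h => hg (by simpa using QuotientGroup.eq.1 h)
  have := DFunLike.congr_fun (DFunLike.congr_fun hconj g) none
  simp only [MonoidHom.comp_apply, MulEquiv.toMonoidHom_eq_coe, MonoidHom.coe_coe,
    MulAut.conj_apply, Equiv.Perm.mul_apply, Equiv.swap_inv, τ, Equiv.swap_apply_left, hρ] at this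
  rw [Equiv.swap_apply_of_ne_of_ne (by simp) (by simpa using hg1)] at this
  exact Option.some_ne_none _ this

theorem exists_hom_pushoutI (hG : IsAmalgamatedProduct.{w} f₁ f₂ j₁ j₂) [Countable H]
    [Countable G₁] [Countable G₂] :
    ∃ k : G →* Monoid.PushoutI (pairHom f₁ f₂),
      k.comp j₁ = pairOf₁ f₁ f₂ ∧ k.comp j₂ = pairOf₂ f₁ f₂ :=
  have : Small.{w} H := Countable.toSmall H
  have : ∀ b, Small.{w} (pairFamily G₁ G₂ b) := fun _ => Countable.toSmall _
  have := Monoid.PushoutI.small.{w} (pairHom f₁ f₂)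
  hG.exists_lift _ _ (pairOf₁_comp_eq_pairOf₂_comp f₁ f₂)

theorem injective_left (hG : IsAmalgamatedProduct.{w} f₁ f₂ j₁ j₂) [Countable H]
    [Countable G₁] [Countable G₂] (hf₁ : Function.Injective f₁)
    (hf₂ : Function.Injective f₂) : Function.Injective j₁ := by
  obtain ⟨k, hk, -⟩ := hG.exists_hom_pushoutI
  refine Function.Injective.of_comp (f := k) ?_
  rw [← MonoidHom.coe_comp, hk]
  exact pairOf₁_injective hf₁ hf₂

theorem injective_right (hG : IsAmalgamatedProduct.{w} f₁ f₂ j₁ j₂) [Countable H]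
    [Countable G₁] [Countable G₂] (hf₁ : Function.Injective f₁)
    (hf₂ : Function.Injective f₂) : Function.Injective j₂ := by
  obtain ⟨k, -, hk⟩ := hG.exists_hom_pushoutI
  refine Function.Injective.of_comp (f := k) ?_
  rw [← MonoidHom.coe_comp, hk]
  exact pairOf₂_injective hf₁ hf₂

theorem range_inf_range_le (hG : IsAmalgamatedProduct.{w} f₁ f₂ j₁ j₂) [Countable H]
    [Countable G₁] [Countable G₂] (hf₁ : Function.Injective f₁)
    (hf₂ : Function.Injective f₂) : j₁.range ⊓ j₂.range ≤ (j₁.comp f₁).range := by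
  rintro _ ⟨⟨x, rfl⟩, ⟨y, hxy⟩⟩
  obtain ⟨k, hk₁, hk₂⟩ := hG.exists_hom_pushoutI
  obtain ⟨h, rfl⟩ := mem_range_of_pairOf₁_eq_pairOf₂ hf₁ hf₂
    (by rw [← hk₁, ← hk₂, MonoidHom.comp_apply, MonoidHom.comp_apply, hxy])
  exact ⟨h, rfl⟩

end IsAmalgamatedProduct

section AsymptoticStabilizer

variable {G : Type*} [Group G] {S : Set (Subgroup G)}

theorem TendstoInftyRel.mul_const {gs : ℕ → G} (h : TendstoInftyRel S gs) (a : G) :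
    TendstoInftyRel S (fun n => gs n * a) := by
  intro K hK t₁ t₂
  refine (h K hK t₁ (t₂ * a⁻¹)).subset fun n ⟨k, hk, hn⟩ => ⟨k, hk, ?_⟩
  rw [← mul_assoc, ← hn, mul_inv_cancel_right]

theorem TendstoInftyRel.eventually_notMem {gs : ℕ → G} (h : TendstoInftyRel S gs)
    {K : Subgroup G} (hK : K ∈ S) : ∀ᶠ n in Filter.atTop, gs n ∉ K := by
  rw [← Nat.cofinite_eq_atTop]
  exact (h K hK 1 1).eventually_cofinite_notMem.mono fun n hn hK => hn ⟨gs n, hK, by simp⟩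

def asymptoticStabilizer (S : Set (Subgroup G)) (X : Set G) : Subgroup G where
  carrier := {g | ∀ gs, TendstoInftyRel S gs → ∀ᶠ n in Filter.atTop, (gs n * g ∈ X ↔ gs n ∈ X)}
  one_mem' _ _ := by simp
  mul_mem' {a b} ha hb gs hgs := by
    filter_upwards [ha gs hgs, hb _ (hgs.mul_const a)] with n hna hnb
    rw [← mul_assoc, hnb, hna]
  inv_mem' {a} ha gs hgs := by
    filter_upwards [ha _ (hgs.mul_const a⁻¹)] with n hn
    rw [← hn, inv_mul_cancel_right]

theorem mem_asymptoticStabilizer {K : Subgroup G} (hK : K ∈ S) {X : Set G} {s : G}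
    (hs : ∀ x ∈ X, x * s ∉ K → x * s ∈ X) (hs' : ∀ x ∈ X, x * s⁻¹ ∉ K → x * s⁻¹ ∈ X) :
    s ∈ asymptoticStabilizer S X := fun gs hgs => by
  filter_upwards [hgs.eventually_notMem hK, (hgs.mul_const s).eventually_notMem hK] with n hn hns
  exact ⟨fun h => by simpa using hs' _ h (by simpa using hn), fun h => hs _ h hns⟩

end AsymptoticStabilizer

-- Models `A = T ∖ {1}` for a right transversal `T ∋ 1` of `K` in `S`, without uniqueness of
-- the representatives.
structure IsPuncturedTransversal {G : Type*} [Group G] (K S : Subgroup G) (A : Set G) :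
    Prop where
  le : K ≤ S
  subset : A ⊆ S
  notMem : ∀ a ∈ A, a ∉ K
  mem_or_exists_mul_eq : ∀ s ∈ S, s ∈ K ∨ ∃ k ∈ K, ∃ a ∈ A, s = k * a

theorem isPuncturedTransversal_image {H G₁ G : Type*} [Group H] [Group G₁] [Group G]
    {f : H →* G₁} {j : G₁ →* G} (hj : Function.Injective j) {T : Set G₁}
    (hT : (1 : G₁) ∈ T ∧ ∀ x : G₁, ∃! t : G₁, t ∈ T ∧ x * t⁻¹ ∈ f.range) :
    IsPuncturedTransversal (j.comp f).range j.range (j '' (T \ {1})) := by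
  have eq_one : ∀ t ∈ T, t ∈ f.range → t = 1 := fun t ht htf =>
    (hT.2 t).unique ⟨ht, by simp⟩ ⟨hT.1, by simpa using htf⟩
  refine ⟨?_, ?_, ?_, ?_⟩
  · rintro _ ⟨h, rfl⟩
    exact ⟨f h, rfl⟩
  · rintro _ ⟨t, -, rfl⟩
    exact ⟨t, rfl⟩
  · rintro _ ⟨t, ⟨ht, ht1⟩, rfl⟩ ⟨h, hh⟩
    exact ht1 (eq_one t ht ⟨h, hj hh⟩)
  · rintro _ ⟨x, rfl⟩
    obtain ⟨t, ⟨ht, h, hh⟩, -⟩ := hT.2 x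
    obtain rfl : x = f h * t := by rw [hh, inv_mul_cancel_right]
    by_cases ht1 : t = 1
    · exact Or.inl ⟨h, by simp [ht1]⟩
    · exact Or.inr ⟨j (f h), ⟨h, rfl⟩, j t, ⟨t, ⟨ht, ht1⟩, rfl⟩, map_mul j _ _⟩

inductive IsAltProd {G : Type*} [Mul G] : Set G → Set G → G → Prop
  | of_mem {A B : Set G} {a : G} : a ∈ A → IsAltProd A B a
  | mul {A B : Set G} {a y : G} : a ∈ A → IsAltProd B A y → IsAltProd A B (a * y)

section AltProd

variable {G : Type*} {A B : Set G}

theorem IsAltWord.symm {l : List G} (h : IsAltWord A B l) : IsAltWord B A l :=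
  ⟨fun x hx => (h.1 x hx).symm, h.2.imp fun _ _ => Or.symm⟩

theorem isAltProd_iff_exists_isAltWord [Monoid G] (hAB : Disjoint A B) {x : G} :
    IsAltProd A B x ↔ ∃ l, IsAltWord A B l ∧ x = l.prod ∧ ∃ a ∈ A, l.head? = some a := by
  constructor
  · intro hx
    induction hx with
    | of_mem ha => exact ⟨[_], ⟨by simp [ha], List.isChain_singleton _⟩, by simp, _, ha, rfl⟩
    | @mul A B a y ha _ ih =>
      obtain ⟨l, hl, rfl, b, hb, hlb⟩ := ih hAB.symm
      obtain ⟨l', rfl⟩ : ∃ l', l = b :: l' := by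
        cases l with
        | nil => simp at hlb
        | cons c l' => simp_all
      refine ⟨a :: b :: l', ⟨?_, ?_⟩, by simp, a, ha, rfl⟩
      · simpa [ha] using hl.symm.1
      · exact List.isChain_cons_cons.2 ⟨Or.inl ⟨ha, hb⟩, hl.symm.2⟩
  · rintro ⟨l, hl, rfl, a, ha, hla⟩
    induction l generalizing A B a with
    | nil => simp at hla
    | cons a' l ih =>
      obtain rfl : a' = a := by simpa using hla
      cases l with
      | nil => simpa using IsAltProd.of_mem ha
      | cons b l =>
        have hb : b ∈ B := by
          rcases (List.isChain_cons_cons.1 hl.2).1 with ⟨-, hb⟩ | ⟨haB, -⟩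
          · exact hb
          · exact absurd haB (Set.disjoint_left.1 hAB ha)
        have htail : IsAltWord A B (b :: l) :=
          ⟨fun x hx => hl.1 x (List.mem_cons_of_mem _ hx), (List.isChain_cons_cons.1 hl.2).2⟩
        exact IsAltProd.mul ha (ih hAB.symm htail.symm b hb rfl)

theorem setOf_exists_isAltWord_eq [Group G] {H : Type*} [Group H] (k : H →* G)
    (hAB : Disjoint A B) :
    {x | ∃ (h : H) (l : List G), IsAltWord A B l ∧ x = k h * l.prod ∧
      ∃ a ∈ A, l.head? = some a} = (k.range : Set G) * {y | IsAltProd A B y} := by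
  ext x
  constructor
  · rintro ⟨h, l, hl, rfl, hhead⟩
    exact ⟨_, ⟨h, rfl⟩, _, (isAltProd_iff_exists_isAltWord hAB).2 ⟨l, hl, rfl, hhead⟩, rfl⟩
  · rintro ⟨_, ⟨h, rfl⟩, _, hy, rfl⟩
    obtain ⟨l, hl, rfl, hhead⟩ := (isAltProd_iff_exists_isAltWord hAB).1 hy
    exact ⟨h, l, hl, rfl, hhead⟩

variable [Group G] {K S T : Subgroup G}

theorem IsPuncturedTransversal.exists_mul_eq (hA : IsPuncturedTransversal K S A) {a k : G}
    (ha : a ∈ A) (hk : k ∈ K) : ∃ k' ∈ K, ∃ a' ∈ A, a * k = k' * a' :=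
  (hA.mem_or_exists_mul_eq _ (mul_mem (hA.subset ha) (hA.le hk))).resolve_left fun h =>
    hA.notMem a ha (by simpa using mul_mem h (inv_mem hk))

theorem IsPuncturedTransversal.disjoint (hA : IsPuncturedTransversal K S A)
    (hB : IsPuncturedTransversal K T B) (hST : S ⊓ T ≤ K) : Disjoint A B :=
  Set.disjoint_left.2 fun _ ha hb => hA.notMem _ ha (hST ⟨hA.subset ha, hB.subset hb⟩)

theorem IsAltProd.mul_mem_or_exists (hA : IsPuncturedTransversal K S A)
    (hB : IsPuncturedTransversal K T B) {y s : G} (hy : IsAltProd A B y) (hs : s ∈ S ∨ s ∈ T) :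
    y * s ∈ K ∨ ∃ k ∈ K, ∃ z, IsAltProd A B z ∧ y * s = k * z := by
  induction hy generalizing S T with
  | @of_mem A B a ha =>
    rcases hs with hs | hs
    · rcases hA.mem_or_exists_mul_eq _ (mul_mem (hA.subset ha) hs) with h | ⟨k, hk, a', ha', h⟩
      · exact Or.inl h
      · exact Or.inr ⟨k, hk, a', .of_mem ha', h⟩
    · right
      rcases hB.mem_or_exists_mul_eq s hs with hsK | ⟨k, hk, b, hb, rfl⟩
      · obtain ⟨k', hk', a', ha', h⟩ := hA.exists_mul_eq ha hsK
        exact ⟨k', hk', a', .of_mem ha', h⟩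
      · obtain ⟨k', hk', a', ha', h⟩ := hA.exists_mul_eq ha hk
        exact ⟨k', hk', a' * b, .mul ha' (.of_mem hb), by rw [← mul_assoc, h, mul_assoc]⟩
  | @mul A B a y ha _ ih =>
    right
    rw [mul_assoc]
    rcases ih hB hA hs.symm with h | ⟨k, hk, z, hz, h⟩
    · obtain ⟨k', hk', a', ha', h'⟩ := hA.exists_mul_eq ha h
      exact ⟨k', hk', a', .of_mem ha', h'⟩
    · obtain ⟨k', hk', a', ha', h'⟩ := hA.exists_mul_eq ha hk
      exact ⟨k', hk', a' * z, .mul ha' hz, by rw [h, ← mul_assoc, h', mul_assoc]⟩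

theorem mul_mem_mul_setOf_isAltProd (hA : IsPuncturedTransversal K S A)
    (hB : IsPuncturedTransversal K T B) {x s : G}
    (hx : x ∈ (K : Set G) * {y | IsAltProd A B y}) (hs : s ∈ S ∨ s ∈ T) (hxs : x * s ∉ K) :
    x * s ∈ (K : Set G) * {y | IsAltProd A B y} := by
  obtain ⟨k, hk, y, hy, rfl⟩ := hx
  rw [mul_assoc] at hxs ⊢
  rcases hy.mul_mem_or_exists hA hB hs with h | ⟨k', hk', z, hz, h⟩
  · exact absurd (mul_mem hk h) hxs
  · exact ⟨k * k', mul_mem hk hk', z, hz, by rw [h]; exact mul_assoc k k' z⟩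

theorem asymptoticStabilizer_mul_setOf_isAltProd_eq_top {𝒮 : Set (Subgroup G)} (hK : K ∈ 𝒮)
    (hA : IsPuncturedTransversal K S A) (hB : IsPuncturedTransversal K T B) (hST : S ⊔ T = ⊤) :
    asymptoticStabilizer 𝒮 ((K : Set G) * {y | IsAltProd A B y}) = ⊤ := by
  have hgen : ∀ s, s ∈ S ∨ s ∈ T →
      s ∈ asymptoticStabilizer 𝒮 ((K : Set G) * {y | IsAltProd A B y}) := fun s hs =>
    mem_asymptoticStabilizer hK (fun _ hx => mul_mem_mul_setOf_isAltProd hA hB hx hs)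
      (fun _ hx => mul_mem_mul_setOf_isAltProd hA hB hx (hs.imp inv_mem inv_mem))
  exact eq_top_iff.2 (hST ▸ sup_le (fun s hs => hgen s (.inl hs)) (fun s hs => hgen s (.inr hs)))

end AltProd

/-- Let `G = G₁ *_H G₂` with transversals `T₁, T₂` (containing `1`) for the right cosets
of `H` in `G₁` and `G₂`, and let `p₁` be the indicator function of the set of elements of
`G` whose normal form `h t₁ t₂ ⋯ t_k` begins with a letter `t₁ ∈ T₁ ∖ {1}`. Then for
every `g ∈ G` and every sequence `(gₙ)` going to infinity relative to `{H}`, one has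
`p₁(gₙ) - p₁(gₙ g) → 0`; i.e. the image of `p₁` in `ℓ^∞(G)/c₀(G, {H})` is fixed by the
right translation action of `G`. -/
theorem indicator_rightTranslationInvariant_mod_c0
    {H G₁ G₂ G : Type*} [Group H] [Group G₁] [Group G₂] [Group G]
    [Countable H] [Countable G₁] [Countable G₂] [Countable G]
    (f₁ : H →* G₁) (f₂ : H →* G₂)
    (hf₁ : Function.Injective f₁) (hf₂ : Function.Injective f₂)
    (j₁ : G₁ →* G) (j₂ : G₂ →* G)
    (hG : IsAmalgamatedProduct f₁ f₂ j₁ j₂)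
    (T₁ : Set G₁) (T₂ : Set G₂)
    (hT₁ : (1 : G₁) ∈ T₁ ∧ ∀ x : G₁, ∃! t : G₁, t ∈ T₁ ∧ x * t⁻¹ ∈ f₁.range)
    (hT₂ : (1 : G₂) ∈ T₂ ∧ ∀ x : G₂, ∃! t : G₂, t ∈ T₂ ∧ x * t⁻¹ ∈ f₂.range)
    (p₁ : G → ℂ)
    (hp₁ : p₁ = Set.indicator
      {x : G | ∃ (h : H) (l : List G),
        IsAltWord ((fun a => j₁ a) '' (T₁ \ {1})) ((fun b => j₂ b) '' (T₂ \ {1})) l ∧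
        x = j₁ (f₁ h) * l.prod ∧
        ∃ y ∈ (fun a => j₁ a) '' (T₁ \ {1}), l.head? = some y}
      (1 : G → ℂ)) :
    ∀ (g : G) (gs : ℕ → G), TendstoInftyRel {(j₁.comp f₁).range} gs →
      Filter.Tendsto (fun n => p₁ (gs n) - p₁ (gs n * g)) Filter.atTop (nhds 0) := by
  set A := (fun a => j₁ a) '' (T₁ \ {1})
  set B := (fun b => j₂ b) '' (T₂ \ {1})
  have hA : IsPuncturedTransversal (j₁.comp f₁).range j₁.range A :=
    isPuncturedTransversal_image (hG.injective_left hf₁ hf₂) hT₁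
  have hB : IsPuncturedTransversal (j₁.comp f₁).range j₂.range B := by
    rw [hG.1]
    exact isPuncturedTransversal_image (hG.injective_right hf₁ hf₂) hT₂
  have hAB : Disjoint A B := hA.disjoint hB (hG.range_inf_range_le hf₁ hf₂)
  have hsupp := setOf_exists_isAltWord_eq (j₁.comp f₁) hAB
  simp only [MonoidHom.comp_apply] at hsupp
  have hstab := asymptoticStabilizer_mul_setOf_isAltProd_eq_top (Set.mem_singleton _) hA hB
    hG.range_sup_range_eq_top
  intro g gs hgs
  rw [hp₁, hsupp]
  exact tendsto_const_nhds.congr' (((hstab ▸ Subgroup.mem_top g) gs hgs).mono fun n hn =>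
    (sub_eq_zero.2 (Set.indicator_eq_indicator hn.symm rfl)).symm)

end PPx
end
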